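/- Any positive odd integer n achieving the minimum in the definition of c_m (i.e., n = c_m) has a prime factorization using only consecutive odd primes starting at 3: if p is a prime dividing c_m and q is an odd prime with q < p, then q divides c_m; moreover 2 does not divide c_m. -/

import Mathlib

/-- Number of nontrivial proper divisors of `n`: divisors `d` with `1 < d < n`. -/
def ntpd (n : ℕ) : ℕ := (n.divisors.filter (fun d => 1 < d ∧ d < n)).card

/-- `cseq m` is the smallest positive odd integer with at least `m` nontrivial
proper divisors (with `cseq 0 = 3` by convention). -/
noncomputable def cseq (m : ℕ) : ℕ := if m = 0 then 3 else sInf {n | Odd n ∧ 0 < n ∧ m ≤ ntpd n}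

/-! Since `(p ^ k * s).divisors.card = (k + 1) * s.divisors.card` whenever `p ∤ s`, replacing a
prime factor `p` of `n` by a smaller prime `q ∤ n`, with the same exponent, gives a smaller number
with equally many divisors, odd if `q` and `n` are. Minimality of `cseq m` rules this out. -/

theorem ntpd_eq_card_divisors_sub_two (n : ℕ) : ntpd n = n.divisors.card - 2 := by
  rcases Nat.lt_or_ge n 2 with hn | hn
  · interval_cases n <;> decide
  have hfilter : n.divisors.filter (fun d => 1 < d ∧ d < n) = n.divisors \ {1, n} := by
    ext d
    simp only [Finset.mem_filter, Finset.mem_sdiff, Finset.mem_insert, Finset.mem_singleton,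
      Nat.mem_divisors]
    constructor
    · rintro ⟨hdn, h1, h2⟩
      exact ⟨hdn, by omega⟩
    · rintro ⟨⟨hdn, hn0⟩, hne⟩
      have hd_pos : 0 < d := Nat.pos_of_dvd_of_pos hdn (by omega)
      have hd_le : d ≤ n := Nat.le_of_dvd (by omega) hdn
      exact ⟨⟨hdn, hn0⟩, by omega, by omega⟩
  have hsub : ({1, n} : Finset ℕ) ⊆ n.divisors := by
    simp only [Finset.insert_subset_iff, Finset.singleton_subset_iff, Nat.one_mem_divisors,
      Nat.mem_divisors_self _ (by omega : n ≠ 0)]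
    exact ⟨by omega, trivial⟩
  rw [ntpd, hfilter, Finset.card_sdiff_of_subset hsub, Finset.card_pair (by omega)]

theorem card_divisors_prime_pow_mul {p s : ℕ} (hp : p.Prime) (hps : ¬ p ∣ s) (k : ℕ) :
    (p ^ k * s).divisors.card = (k + 1) * s.divisors.card := by
  rw [Nat.Coprime.card_divisors_mul ((hp.coprime_iff_not_dvd.mpr hps).pow_left k),
    Nat.divisors_prime_pow hp, Finset.card_map, Finset.card_range]

theorem cseq_spec (m : ℕ) : Odd (cseq m) ∧ m ≤ ntpd (cseq m) := by
  rcases eq_or_ne m 0 with rfl | hm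
  · exact ⟨by rw [cseq, if_pos rfl]; decide, Nat.zero_le _⟩
  have hwitness : 3 ^ (m + 1) ∈ {n | Odd n ∧ 0 < n ∧ m ≤ ntpd n} := by
    refine ⟨Odd.pow (by decide), by positivity, ?_⟩
    rw [ntpd_eq_card_divisors_sub_two, Nat.divisors_prime_pow Nat.prime_three, Finset.card_map,
      Finset.card_range]
    omega
  obtain ⟨hodd, -, hle⟩ := Nat.sInf_mem ⟨_, hwitness⟩
  rw [cseq, if_neg hm]
  exact ⟨hodd, hle⟩

theorem cseq_le {m n : ℕ} (hm : m ≠ 0) (hn : Odd n) (hmn : m ≤ ntpd n) : cseq m ≤ n := by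
  rw [cseq, if_neg hm]
  exact Nat.sInf_le ⟨hn, hn.pos, hmn⟩

theorem cseq_prime_factors_consecutive (m : ℕ) (hm : 1 ≤ m) :
    ¬ 2 ∣ cseq m ∧
    ∀ p q : ℕ, p.Prime → p ∣ cseq m → q.Prime → Odd q → q < p → q ∣ cseq m := by
  obtain ⟨hodd, hm_le⟩ := cseq_spec m
  refine ⟨hodd.not_two_dvd_nat, fun p q hp hpn hq hq_odd hqp => ?_⟩
  by_contra hqn
  set n := cseq m
  have hn0 : n ≠ 0 := hodd.pos.ne'
  set k := n.factorization p
  set s := n / p ^ k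
  have hn_eq : p ^ k * s = n := Nat.ordProj_mul_ordCompl_eq_self n p
  have hqs : ¬ q ∣ s := fun h => hqn (h.trans (Nat.ordCompl_dvd n p))
  have hk : k ≠ 0 := (hp.factorization_pos_of_dvd hn0 hpn).ne'
  have hlt : q ^ k * s < n := by
    rw [← hn_eq]
    exact Nat.mul_lt_mul_of_pos_right (Nat.pow_lt_pow_left hqp hk) (Nat.ordCompl_pos p hn0)
  have hntpd : ntpd (q ^ k * s) = ntpd n := by
    rw [ntpd_eq_card_divisors_sub_two, ntpd_eq_card_divisors_sub_two, ← hn_eq,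
      card_divisors_prime_pow_mul hq hqs,
      card_divisors_prime_pow_mul hp (Nat.not_dvd_ordCompl hp hn0)]
  have hodd' : Odd (q ^ k * s) := hq_odd.pow.mul (hodd.of_dvd_nat (Nat.ordCompl_dvd n p))
  exact (cseq_le (by omega) hodd' (hntpd ▸ hm_le)).not_gt hlt
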